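/- arXiv:2407.03534 — 2 statements merged into one kernel-verified Lean document; each statement's English description precedes it below -/
import Mathlib

section
/- Let p : X → Y be a submetry between metric spaces with X proper. Then the following are equivalent: (1) p is a proper map (preimages of compact sets are compact); (2) every fiber of p is compact; (3) some fiber of p is compact. -/
/-- A submetry maps closed balls onto closed balls of the same radius. -/
def IsSubmetry {X Y : Type*} [MetricSpace X] [MetricSpace Y] (p : X → Y) : Prop :=
  ∀ x : X, ∀ r : ℝ, 0 ≤ r → p '' Metric.closedBall x r = Metric.closedBall (p x) r

open Metric Bornology

namespace IsSubmetry

variable {X Y : Type*} [MetricSpace X] [MetricSpace Y] {p : X → Y}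

theorem exists_fiber_dist_le (hsub : IsSubmetry p) (x : X) (y : Y) :
    ∃ x', p x' = y ∧ dist x x' ≤ dist (p x) y := by
  have hy : y ∈ closedBall (p x) (dist (p x) y) := mem_closedBall.2 (dist_comm y (p x)).le
  rw [← hsub x _ dist_nonneg] at hy
  obtain ⟨x', hx', rfl⟩ := hy
  exact ⟨x', rfl, by simpa [dist_comm] using mem_closedBall.1 hx'⟩

theorem lipschitzWith_one (hsub : IsSubmetry p) : LipschitzWith 1 p := by
  refine LipschitzWith.of_dist_le_mul fun x x' => ?_
  have hx' : p x' ∈ closedBall (p x) (dist x x') := by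
    rw [← hsub x _ dist_nonneg]
    exact ⟨x', mem_closedBall.2 (dist_comm x' x).le, rfl⟩
  simpa [dist_comm] using mem_closedBall.1 hx'

/-- Every point over a set within distance `R` of `y` lies within distance `R` of the fiber
over `y`. -/
theorem isBounded_preimage (hsub : IsSubmetry p) {y : Y} (hy : IsBounded (p ⁻¹' {y}))
    {K : Set Y} (hK : IsBounded K) : IsBounded (p ⁻¹' K) := by
  obtain ⟨R, hR⟩ := hK.subset_closedBall y
  refine (hy.cthickening (δ := R)).subset fun x hx => ?_
  obtain ⟨x', hx'y, hxx'⟩ := hsub.exists_fiber_dist_le x y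
  exact mem_cthickening_of_dist_le x x' R _ hx'y (hxx'.trans (mem_closedBall.1 (hR hx)))

theorem isCompact_preimage [ProperSpace X] (hsub : IsSubmetry p) {y : Y}
    (hy : IsCompact (p ⁻¹' {y})) {K : Set Y} (hK : IsCompact K) : IsCompact (p ⁻¹' K) :=
  isCompact_of_isClosed_isBounded (hK.isClosed.preimage hsub.lipschitzWith_one.continuous)
    (hsub.isBounded_preimage hy.isBounded hK.isBounded)

end IsSubmetry

theorem submetry_proper_tfae_general {X Y : Type*} [MetricSpace X] [MetricSpace Y]
    [ProperSpace X] [Nonempty Y]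
    (p : X → Y) (hsub : IsSubmetry p) :
    List.TFAE [
      ∀ K : Set Y, IsCompact K → IsCompact (p ⁻¹' K),
      ∀ y : Y, IsCompact (p ⁻¹' {y}),
      ∃ y : Y, IsCompact (p ⁻¹' {y})] := by
  tfae_have 1 → 2 := fun h y => h {y} isCompact_singleton
  tfae_have 2 → 3 := fun h => ⟨Classical.arbitrary Y, h _⟩
  tfae_have 3 → 1 := fun ⟨_, hy⟩ _ hK => hsub.isCompact_preimage hy hK
  tfae_finish

theorem submetry_proper_tfae {X Y : Type*} [MetricSpace X] [MetricSpace Y]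
    [ProperSpace X] [Nonempty Y]
    (p : X → Y) (hsurj : Function.Surjective p) (hsub : IsSubmetry p) :
    List.TFAE [
      ∀ K : Set Y, IsCompact K → IsCompact (p ⁻¹' K),
      ∀ y : Y, IsCompact (p ⁻¹' {y}),
      ∃ y : Y, IsCompact (p ⁻¹' {y})] :=
  submetry_proper_tfae_general p hsub
end

section
/- Let p : X → Y be a surjective submetry between metric spaces. Suppose that for a geodesic α : [0, b] → Y (unit-speed, minimizing) and for every x ∈ p⁻¹(α(0)) there is a unique geodesic lift α̃ₓ : [0, b] → X with α̃ₓ(0) = x and p ∘ α̃ₓ = α. Define the holonomy map h_α : p⁻¹(α(0)) → p⁻¹(α(b)) by h_α(x) = α̃ₓ(b). If moreover X is proper, then h_α is continuous. -/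
/-- `γ` is a (unit-speed, minimizing) geodesic on `[0, b]`. -/
def IsGeodesicOn {X : Type*} [MetricSpace X] (γ : ℝ → X) (b : ℝ) : Prop :=
  ∀ s ∈ Set.Icc (0 : ℝ) b, ∀ t ∈ Set.Icc (0 : ℝ) b, dist (γ s) (γ t) = |s - t|

/-- `γ̃` is a geodesic lift of `γ` through `p` starting at `x`. -/
def IsGeodesicLift {X Y : Type*} [MetricSpace X] [MetricSpace Y]
    (p : X → Y) (α : ℝ → Y) (b : ℝ) (x : X) (γ : ℝ → X) : Prop :=
  γ 0 = x ∧ IsGeodesicOn γ b ∧ ∀ t ∈ Set.Icc (0 : ℝ) b, p (γ t) = α t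

/-! The lift map `z ↦ α̃_z`, viewed in `ℝ → X` with the product topology, takes values in the
closed set of clamped geodesic lifts, and such a lift is determined by its starting point. Near `x`
all lifts stay in the product of closed balls `closedBall x (b + 1)`, which is compact because `X` is
proper. Hence every cluster point of the lift map at `x` is a lift starting at `x`, i.e. `α̃_x`, so
the lift map is continuous at `x`, and so is `h = (· b) ∘ lift`. -/

open Filter Metric Set Topology

lemma IsSubmetry.lipschitzWith_one_s17 {X Y : Type*} [MetricSpace X] [MetricSpace Y] {p : X → Y}
    (hp : IsSubmetry p) : LipschitzWith 1 p := by
  refine LipschitzWith.of_dist_le_mul fun a c => ?_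
  have hc : p c ∈ p '' closedBall a (dist a c) := ⟨c, by simp [dist_comm], rfl⟩
  rw [hp a (dist a c) dist_nonneg, mem_closedBall] at hc
  simpa [dist_comm] using hc

lemma continuousWithinAt_section_of_isCompact {A B : Type*} [TopologicalSpace A] [T2Space A]
    [TopologicalSpace B] {f : A → B} {g : B → A} {S : Set A} {C K : Set B} {x : A}
    (hg : Continuous g) (hC : IsClosed C) (hK : IsCompact K)
    (hfC : ∀ z ∈ S, f z ∈ C) (hgf : ∀ z ∈ S, g (f z) = z)
    (huniq : ∀ γ ∈ C, g γ = x → γ = f x) (hfK : ∀ᶠ z in 𝓝[S] x, f z ∈ K) :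
    ContinuousWithinAt f S x := by
  refine hK.tendsto_nhds_of_unique_mapClusterPt hfK fun γ _ hγ => huniq γ ?_ ?_
  · exact hC.mem_of_mapClusterPt hγ (eventually_nhdsWithin_of_forall hfC)
  · have hgγ : MapClusterPt (g γ) (𝓝[S] x) id :=
      ((hγ.continuousAt_comp hg.continuousAt).congrFun
        (eventually_nhdsWithin_of_forall hgf))
    exact eq_of_nhds_neBot (hgγ.clusterPt.mono (by simpa using nhdsWithin_le_nhds))

lemma isClosed_setOf_isGeodesicOn {X : Type*} [MetricSpace X] (b : ℝ) :
    IsClosed {γ : ℝ → X | IsGeodesicOn γ b} := by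
  simp only [IsGeodesicOn, ofPred_forall]
  exact isClosed_biInter fun s _ => isClosed_biInter fun t _ =>
    isClosed_eq (by fun_prop) continuous_const

section ClampedLifts

variable {X Y : Type*} [MetricSpace X] [MetricSpace Y]

def clampedGeodesicLifts (p : X → Y) (α : ℝ → Y) (b : ℝ) : Set (ℝ → X) :=
  {γ | IsGeodesicLift p α b (γ 0) γ ∧ ∀ t, t ∉ Icc (0 : ℝ) b → γ t = γ (max 0 (min t b))}

lemma isClosed_clampedGeodesicLifts {p : X → Y} (hp : Continuous p) (α : ℝ → Y) (b : ℝ) :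
    IsClosed (clampedGeodesicLifts p α b) := by
  have hlifts : clampedGeodesicLifts p α b = {γ | IsGeodesicOn γ b} ∩
      (⋂ t ∈ Icc (0 : ℝ) b, {γ | p (γ t) = α t}) ∩
      ⋂ t ∈ (Icc (0 : ℝ) b)ᶜ, {γ | γ t = γ (max 0 (min t b))} := by
    ext γ
    simp [clampedGeodesicLifts, IsGeodesicLift, and_assoc]
  rw [hlifts]
  refine ((isClosed_setOf_isGeodesicOn b).inter ?_).inter ?_ <;>
    exact isClosed_biInter fun t _ => isClosed_eq (by fun_prop) (by fun_prop)

lemma dist_le_of_mem_clampedGeodesicLifts {p : X → Y} {α : ℝ → Y} {b : ℝ} (hb : 0 ≤ b)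
    {γ : ℝ → X} (hγ : γ ∈ clampedGeodesicLifts p α b) (t : ℝ) : dist (γ t) (γ 0) ≤ b := by
  obtain ⟨⟨-, hgeo, -⟩, hclamp⟩ := hγ
  obtain ⟨s, hs, hγts⟩ : ∃ s ∈ Icc (0 : ℝ) b, γ t = γ s := by
    by_cases ht : t ∈ Icc (0 : ℝ) b
    · exact ⟨t, ht, rfl⟩
    · exact ⟨_, ⟨le_max_left _ _, max_le hb (min_le_right _ _)⟩, hclamp t ht⟩
  rw [hγts, hgeo s hs 0 ⟨le_rfl, hb⟩, sub_zero, abs_of_nonneg hs.1]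
  exact hs.2

end ClampedLifts

theorem holonomy_continuous_general {X Y : Type*} [MetricSpace X] [MetricSpace Y]
    [ProperSpace X]
    (p : X → Y) (hsub : IsSubmetry p)
    (α : ℝ → Y) (b : ℝ) (hb : 0 ≤ b)
    (hlift : ∀ x : X, p x = α 0 → ∃! γ : ℝ → X,
      (IsGeodesicLift p α b x γ ∧ ∀ t, t ∉ Set.Icc (0 : ℝ) b → γ t = γ (max 0 (min t b))))
    (h : X → X)
    (hh : ∀ x : X, ∀ hx : p x = α 0, ∀ γ : ℝ → X, IsGeodesicLift p α b x γ → h x = γ b) :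
    ContinuousOn h (p ⁻¹' {α 0}) := by
  choose! Λ hΛ hΛuniq using hlift
  have hΛmem : ∀ z ∈ p ⁻¹' {α 0}, Λ z ∈ clampedGeodesicLifts p α b := fun z hz => by
    obtain ⟨hlift, hclamp⟩ := hΛ z hz
    refine ⟨?_, hclamp⟩
    rwa [hlift.1]
  intro x hx
  have hΛx : ContinuousWithinAt Λ (p ⁻¹' {α 0}) x := by
    refine continuousWithinAt_section_of_isCompact (continuous_apply 0)
      (isClosed_clampedGeodesicLifts hsub.lipschitzWith_one_s17.continuous α b)
      (isCompact_univ_pi fun _ => isCompact_closedBall x (b + 1)) hΛmem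
      (fun z hz => (hΛ z hz).1.1) (fun γ hγ hγx => hΛuniq x hx γ ⟨hγx ▸ hγ.1, hγ.2⟩) ?_
    filter_upwards [self_mem_nhdsWithin, nhdsWithin_le_nhds (closedBall_mem_nhds x one_pos)]
      with z hz hzx
    refine mem_univ_pi.2 fun t => mem_closedBall.2 ?_
    calc dist (Λ z t) x ≤ dist (Λ z t) (Λ z 0) + dist (Λ z 0) x := dist_triangle _ _ _
      _ ≤ b + 1 := add_le_add (dist_le_of_mem_clampedGeodesicLifts hb (hΛmem z hz) t)
          (by rwa [(hΛ z hz).1.1])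
  exact ((continuous_apply b).continuousAt.comp_continuousWithinAt hΛx).congr
    (fun z hz => hh z hz _ (hΛ z hz).1) (hh x hx _ (hΛ x hx).1)

theorem holonomy_continuous {X Y : Type*} [MetricSpace X] [MetricSpace Y]
    [ProperSpace X]
    (p : X → Y) (hsurj : Function.Surjective p) (hsub : IsSubmetry p)
    (α : ℝ → Y) (b : ℝ) (hb : 0 ≤ b) (hα : IsGeodesicOn α b)
    (hlift : ∀ x : X, p x = α 0 → ∃! γ : ℝ → X,
      (IsGeodesicLift p α b x γ ∧ ∀ t, t ∉ Set.Icc (0 : ℝ) b → γ t = γ (max 0 (min t b))))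
    (h : X → X)
    (hh : ∀ x : X, ∀ hx : p x = α 0, ∀ γ : ℝ → X, IsGeodesicLift p α b x γ → h x = γ b) :
    ContinuousOn h (p ⁻¹' {α 0}) :=
  holonomy_continuous_general p hsub α b hb hlift h hh
end
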